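/- Let n ≥ 1, let λ be a partition with l(λ) = n, and let μ ⊆ λ be a partition with l(μ) = n−1. Then the following identity holds in ℤ[t]: Σ_β φ_{λ/β}(t²) · t^{2(|β|−|μ|)} · sk_{β/μ}(t²) = sk_{λ/μ}(t²), where the sum is over all partitions β with μ ⊆ β and β ≼ λ (i.e. λ/β is a horizontal strip). -/

import Mathlib

open scoped BigOperators Classical

namespace EK

/-- Conjugate partition: `conj f j = #{i : f i ≥ j}` (parts of `f` are `f 0, f 1, …`,
i.e. `f i = λ_{i+1}`). -/
noncomputable def conj (f : ℕ → ℕ) (j : ℕ) : ℕ := Nat.card {i : ℕ // j ≤ f i}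

/-- `f` represents a partition: weakly decreasing with finitely many nonzero parts. -/
def IsPartition (f : ℕ → ℕ) : Prop := Antitone f ∧ ∃ N, ∀ i, N ≤ i → f i = 0

/-- `l(f) = n`: the first `n` parts are positive, the rest vanish. -/
def HasLength (f : ℕ → ℕ) (n : ℕ) : Prop := (∀ i < n, 0 < f i) ∧ ∀ i, n ≤ i → f i = 0

/-- `|λ| = Σ_i λ_i`. -/
noncomputable def psize (f : ℕ → ℕ) : ℕ := ∑ᶠ i, f i

/-- `n(λ) = Σ_{i ≥ 1} (i-1) λ_i` (0-indexed: `Σ_i i * f i`). -/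
noncomputable def nstat (f : ℕ → ℕ) : ℕ := ∑ᶠ i, i * f i

/-- `φ_r(u) = ∏_{i=1}^r (1 - u^i)`. -/
def phiPoch {F : Type*} [Field F] (u : F) (r : ℕ) : F := ∏ i ∈ Finset.Icc 1 r, (1 - u ^ i)

/-- Gaussian binomial `binom(a,b)_u = φ_a(u)/(φ_b(u) φ_{a-b}(u))` for `0 ≤ b ≤ a`, `0` otherwise. -/
noncomputable def gauss {F : Type*} [Field F] (u : F) (a b : ℤ) : F :=
  if 0 ≤ b ∧ b ≤ a then phiPoch u a.toNat / (phiPoch u b.toNat * phiPoch u (a - b).toNat)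
  else 0

/-- `sk_{λ/μ}(u) = u^{Σ_{j≥1} C(λ'_j - μ'_j, 2)} ∏_{j≥1} binom(λ'_j - μ'_{j+1}, m_j(μ))_u`
(the factors for `j > λ_1` are all `1` and the exponents vanish there, so the product and
sum are taken over `1 ≤ j ≤ λ_1 = f 0`). -/
noncomputable def sk {F : Type*} [Field F] (u : F) (f g : ℕ → ℕ) : F :=
  u ^ (∑ j ∈ Finset.Icc 1 (f 0), Nat.choose (conj f j - conj g j) 2) *
    ∏ j ∈ Finset.Icc 1 (f 0),
      gauss u ((conj f j : ℤ) - (conj g (j + 1) : ℤ)) ((conj g j : ℤ) - (conj g (j + 1) : ℤ))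

/-- `μ ⊆ λ` and `λ/μ` is a horizontal strip, i.e. `λ'_j - μ'_j ∈ {0,1}` for all `j ≥ 1`. -/
def IsHStrip (f g : ℕ → ℕ) : Prop :=
  (∀ i, g i ≤ f i) ∧ ∀ j, 1 ≤ j → conj f j ≤ conj g j + 1

/-- `φ_{λ/μ}(u) = ∏_{j ≥ 1, λ'_j = μ'_j + 1, λ'_{j+1} = μ'_{j+1}} (1 - u^{m_j(λ)})` if `λ/μ` is
a horizontal strip, and `0` otherwise (factors with `j > λ_1` never occur). -/
noncomputable def phiStrip {F : Type*} [Field F] (u : F) (f g : ℕ → ℕ) : F :=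
  if IsHStrip f g then
    ∏ j ∈ (Finset.Icc 1 (f 0)).filter
        (fun j => conj f j = conj g j + 1 ∧ conj f (j + 1) = conj g (j + 1)),
      (1 - u ^ (conj f j - conj f (j + 1)))
  else 0

/-- `b_λ(u) = ∏_{i ≥ 1} φ_{m_i(λ)}(u)` (factors with `i > λ_1` are `1`). -/
noncomputable def bcoef {F : Type*} [Field F] (u : F) (f : ℕ → ℕ) : F :=
  ∏ i ∈ Finset.Icc 1 (f 0), phiPoch u (conj f i - conj f (i + 1))

/-! Index the strips `β` by the set `S` of columns in which `β` is one box shorter than `λ`. In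
column coordinates the summand `φ_{λ/β}(u) u^{|β|-|μ|} sk_{β/μ}(u)` is `u^{Σ_j C(λ'_j-μ'_j, 2)}`
times a product of column weights, the weight of column `j` depending only on whether `j` and
`j + 1` lie in `S`; the sets `S` that come from no strip get weight zero. The sum over all `S` is
then a transfer-matrix product, which the q-Pascal rule
`(1 - u^A) binom(A-1, B)_u = (1 - u^{A-B}) binom(A, B)_u` evaluates column by column to
`∏_j binom(λ'_j - μ'_{j+1}, m_j(μ))_u`. -/

section Conjugate

open Finset

variable {f g : ℕ → ℕ} {j k : ℕ}

lemma conj_eq_of_forall_iff (h : ∀ i, j ≤ f i ↔ i < k) : conj f j = k := by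
  rw [conj, Nat.card_congr ((Equiv.subtypeEquivRight h).trans Fin.equivSubtype.symm),
    Nat.card_eq_fintype_card, Fintype.card_fin]

lemma le_apply_iff_lt_conj (hf : IsPartition f) (hj : 1 ≤ j) (i : ℕ) :
    j ≤ f i ↔ i < conj f j := by
  obtain ⟨hanti, N, hN⟩ := hf
  have hex : ∃ i, f i < j := ⟨N, by rw [hN N le_rfl]; omega⟩
  have hfind : ∀ i, j ≤ f i ↔ i < Nat.find hex := fun i =>
    ⟨fun hi => lt_of_not_ge fun hle => (hanti hle |>.trans_lt (Nat.find_spec hex)).not_ge hi,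
      fun hi => not_lt.1 (Nat.find_min hex hi)⟩
  rw [conj_eq_of_forall_iff hfind, hfind]

lemma conj_eq_zero (hf : IsPartition f) (hj : f 0 < j) : conj f j = 0 :=
  Nat.eq_zero_of_not_pos fun h => by
    have := (le_apply_iff_lt_conj hf (by omega) 0).2 h
    omega

lemma conj_anti (hf : IsPartition f) (hj : 1 ≤ j) (hjk : j ≤ k) : conj f k ≤ conj f j :=
  le_of_forall_lt fun i hi => (le_apply_iff_lt_conj hf hj i).1 <|
    hjk.trans ((le_apply_iff_lt_conj hf (hj.trans hjk) i).2 hi)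

lemma conj_mono (hg : IsPartition g) (hf : IsPartition f) (hgf : ∀ i, g i ≤ f i) (hj : 1 ≤ j) :
    conj g j ≤ conj f j :=
  le_of_forall_lt fun i hi => (le_apply_iff_lt_conj hf hj i).1 <|
    ((le_apply_iff_lt_conj hg hj i).2 hi).trans (hgf i)

lemma conj_le_of_eq_zero (hf : IsPartition f) {N : ℕ} (hN : ∀ i, N ≤ i → f i = 0) (hj : 1 ≤ j) :
    conj f j ≤ N :=
  le_of_forall_lt fun i hi => by
    have := (le_apply_iff_lt_conj hf hj i).2 hi
    by_contra! h
    have := hN i h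
    omega

def ofCols (c : ℕ → ℕ) (M i : ℕ) : ℕ := #{j ∈ Icc 1 M | i < c j}

lemma ofCols_conj (hf : IsPartition f) {M : ℕ} (hM : f 0 ≤ M) : ofCols (conj f) M = f := by
  funext i
  have : {j ∈ Icc 1 M | i < conj f j} = Icc 1 (f i) := by
    ext j
    simp only [mem_filter, mem_Icc]
    constructor
    · rintro ⟨⟨hj, -⟩, hi⟩
      exact ⟨hj, (le_apply_iff_lt_conj hf hj i).2 hi⟩
    · rintro ⟨hj, hi⟩
      exact ⟨⟨hj, hi.trans ((hf.1 (Nat.zero_le i)).trans hM)⟩, (le_apply_iff_lt_conj hf hj i).1 hi⟩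
  rw [ofCols, this, Nat.card_Icc, Nat.add_sub_cancel]

lemma ofCols_mono {c c' : ℕ → ℕ} {M : ℕ} (h : ∀ j ∈ Icc 1 M, c j ≤ c' j) (i : ℕ) :
    ofCols c M i ≤ ofCols c' M i :=
  card_le_card fun j hj => by
    rw [mem_filter] at hj ⊢
    exact ⟨hj.1, hj.2.trans_le (h j hj.1)⟩

lemma isPartition_ofCols (c : ℕ → ℕ) (M : ℕ) : IsPartition (ofCols c M) := by
  refine ⟨fun i i' hii' => card_le_card fun j hj => ?_, (Icc 1 M).sup c, fun i hi => ?_⟩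
  · rw [mem_filter] at hj ⊢
    exact ⟨hj.1, hii'.trans_lt hj.2⟩
  · refine card_eq_zero.2 (filter_eq_empty_iff.2 fun j hj => ?_)
    exact not_lt.2 ((le_sup hj).trans hi)

lemma conj_ofCols {c : ℕ → ℕ} {M : ℕ} (hc : ∀ j k, 1 ≤ j → j ≤ k → c k ≤ c j)
    (hcM : ∀ j, M < j → c j = 0) (hj : 1 ≤ j) : conj (ofCols c M) j = c j := by
  refine conj_eq_of_forall_iff fun i => ⟨fun hle => ?_, fun hlt => ?_⟩
  · by_contra! hci
    have hsub : {j' ∈ Icc 1 M | i < c j'} ⊆ Icc 1 (j - 1) := fun j' hj' => by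
      rw [mem_filter, mem_Icc] at hj'
      rw [mem_Icc]
      refine ⟨hj'.1.1, Nat.le_sub_one_of_lt (lt_of_not_ge fun hjj' => ?_)⟩
      exact (hc j j' hj hjj').not_gt (hci.trans_lt hj'.2)
    have := card_le_card hsub
    rw [Nat.card_Icc] at this
    exact absurd hle (by unfold ofCols; omega)
  · have hjM : j ≤ M := not_lt.1 fun h => by rw [hcM j h] at hlt; omega
    have hsub : Icc 1 j ⊆ {j' ∈ Icc 1 M | i < c j'} := fun j' hj' => by
      rw [mem_Icc] at hj'
      rw [mem_filter, mem_Icc]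
      exact ⟨⟨hj'.1, hj'.2.trans hjM⟩, hlt.trans_le (hc j' j hj'.1 hj'.2)⟩
    have := card_le_card hsub
    rw [Nat.card_Icc] at this
    unfold ofCols
    omega

lemma psize_eq_sum_conj (hf : IsPartition f) {M : ℕ} (hM : f 0 ≤ M) :
    psize f = ∑ j ∈ Icc 1 M, conj f j := by
  obtain ⟨N, hN⟩ := hf.2
  have hsupp : Function.support f ⊆ ↑(range N) := fun i hi => by
    rw [coe_range, Set.mem_Iio]
    by_contra! h
    exact hi (hN i h)
  rw [psize, finsum_eq_sum_of_support_subset f hsupp]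
  conv_lhs => rw [← ofCols_conj hf hM]
  simp only [ofCols, card_filter]
  rw [sum_comm]
  refine sum_congr rfl fun j hj => ?_
  have hle := conj_le_of_eq_zero hf hN (mem_Icc.1 hj).1
  have hrange : {i ∈ range N | i < conj f j} = range (conj f j) := by
    ext i
    simp only [mem_filter, mem_range]
    omega
  rw [← card_filter, hrange, card_range]

end Conjugate

section Gauss

variable {F : Type*} [Field F] {u : F}

lemma phiPoch_succ (u : F) (r : ℕ) : phiPoch u (r + 1) = phiPoch u r * (1 - u ^ (r + 1)) :=
  Finset.prod_Icc_succ_top (by omega) _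

lemma phiPoch_ne_zero (hU : ∀ k : ℕ, 1 ≤ k → u ^ k ≠ 1) (r : ℕ) : phiPoch u r ≠ 0 :=
  Finset.prod_ne_zero_iff.2 fun i hi => sub_ne_zero.2 (hU i (Finset.mem_Icc.1 hi).1).symm

lemma gauss_zero_zero (u : F) : gauss u 0 0 = 1 := by
  simp [gauss, phiPoch]

lemma gauss_natCast {a b : ℕ} (hba : b ≤ a) :
    gauss u a b = phiPoch u a / (phiPoch u b * phiPoch u (a - b)) := by
  rw [gauss, if_pos ⟨Int.natCast_nonneg b, Int.ofNat_le.2 hba⟩, ← Nat.cast_sub hba]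
  simp only [Int.toNat_natCast]

lemma one_sub_zpow_mul_gauss_sub_one (hU : ∀ k : ℕ, 1 ≤ k → u ^ k ≠ 1) (A B : ℤ) :
    (1 - u ^ A) * gauss u (A - 1) B = (1 - u ^ (A - B)) * gauss u A B := by
  by_cases hB : 0 ≤ B ∧ B < A
  · obtain ⟨b, rfl⟩ := Int.eq_ofNat_of_zero_le hB.1
    obtain ⟨n, hn⟩ := Int.eq_ofNat_of_zero_le (by omega : 0 ≤ A - 1 - b)
    obtain rfl : A = ((b + n + 1 : ℕ) : ℤ) := by push_cast; omega
    rw [show ((b + n + 1 : ℕ) : ℤ) - 1 = ((b + n : ℕ) : ℤ) by push_cast; ring,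
      show ((b + n + 1 : ℕ) : ℤ) - b = ((n + 1 : ℕ) : ℤ) by push_cast; ring,
      gauss_natCast (by omega), gauss_natCast (by omega), zpow_natCast, zpow_natCast,
      show b + n + 1 - b = n + 1 by omega, Nat.add_sub_cancel_left, phiPoch_succ, phiPoch_succ]
    have := phiPoch_ne_zero hU b
    have := phiPoch_ne_zero hU n
    have : 1 - u ^ (n + 1) ≠ 0 := sub_ne_zero.2 (hU (n + 1) (by omega)).symm
    field_simp
  · rcases not_and_or.1 hB with hB | hB
    · simp [gauss, hB]
    · rcases eq_or_lt_of_le (not_lt.1 hB) with rfl | hB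
      · simp [gauss]
      · simp [gauss, show ¬ B ≤ A by omega, show ¬ B ≤ A - 1 by omega]

end Gauss

section ColWeight

variable {F : Type*} [Field F] {u : F} {a b : ℕ → ℤ} {S T : Finset ℕ} {j k : ℕ}

/-- The factor of column `j` in the summand indexed by the set `S` of shortened columns, where
`a` and `b` are the column lengths of `λ` and `μ`. -/
noncomputable def colWeight (u : F) (a b : ℕ → ℤ) (S : Finset ℕ) (j : ℕ) : F :=
  (if j ∈ S then 1 else u ^ (a j - b j)) *
    gauss u (a j - (if j ∈ S then 1 else 0) - b (j + 1)) (b j - b (j + 1)) *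
    (if j ∈ S ∧ j + 1 ∉ S then 1 - u ^ (a j - a (j + 1)) else 1)

lemma colWeight_of_notMem (hj : j ∉ S) :
    colWeight u a b S j = u ^ (a j - b j) * gauss u (a j - b (j + 1)) (b j - b (j + 1)) := by
  simp [colWeight, hj]

lemma colWeight_insert_self :
    colWeight u a b (insert k T) k = gauss u (a k - 1 - b (k + 1)) (b k - b (k + 1)) *
      (if k + 1 ∈ T then 1 else 1 - u ^ (a k - a (k + 1))) := by
  simp [colWeight]

lemma colWeight_insert_of_lt (hkj : k < j) :
    colWeight u a b (insert k T) j = colWeight u a b T j := by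
  simp [colWeight, hkj.ne', (hkj.trans (Nat.lt_succ_self j)).ne']

lemma colWeight_eq_zero_of_le (hj : j ∈ S) (hab : a j ≤ b j) : colWeight u a b S j = 0 := by
  simp [colWeight, hj, gauss, show ¬ b j - b (j + 1) ≤ a j - 1 - b (j + 1) by omega]

lemma colWeight_eq_zero_of_eq (hj : j ∈ S) (hj1 : j + 1 ∉ S) (ha : a (j + 1) = a j) :
    colWeight u a b S j = 0 := by
  simp [colWeight, hj, hj1, ha]

lemma sum_powerset_insert_prod_colWeight {R : Finset ℕ} (hR : ∀ j ∈ R, k < j) (v₀ v₁ : F) :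
    ∑ S ∈ (insert k R).powerset,
        (if k ∈ S then v₀ else v₁) * ∏ j ∈ insert k R, colWeight u a b S j
      = v₁ * (u ^ (a k - b k) * gauss u (a k - b (k + 1)) (b k - b (k + 1))) *
          ∑ T ∈ R.powerset, ∏ j ∈ R, colWeight u a b T j +
        v₀ * gauss u (a k - 1 - b (k + 1)) (b k - b (k + 1)) *
          ∑ T ∈ R.powerset, (if k + 1 ∈ T then 1 else 1 - u ^ (a k - a (k + 1))) *
            ∏ j ∈ R, colWeight u a b T j := by
  have hk : k ∉ R := fun h => (hR k h).false
  rw [Finset.sum_powerset_insert hk]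
  simp only [Finset.prod_insert hk, Finset.mul_sum]
  congr 1 <;> refine Finset.sum_congr rfl fun T hT => ?_
  · have hkT : k ∉ T := fun h => hk (Finset.mem_powerset.1 hT h)
    rw [if_neg hkT, colWeight_of_notMem hkT]
    ring
  · rw [if_pos (Finset.mem_insert_self k T), colWeight_insert_self,
      Finset.prod_congr rfl fun j hj => colWeight_insert_of_lt (hR j hj)]
    ring

/-- The weights `v₀`, `v₁` on the state of the first column are what lets the induction on the
number of columns go through. -/
theorem sum_powerset_Ico_prod_colWeight (hu : u ≠ 0) (hU : ∀ k : ℕ, 1 ≤ k → u ^ k ≠ 1) (m : ℕ) :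
    ∀ k, a (k + m) = 0 → b (k + m) = 0 → ∀ v₀ v₁ : F,
    ∑ S ∈ (Finset.Ico k (k + m)).powerset,
        (if k ∈ S then v₀ else v₁) * ∏ j ∈ Finset.Ico k (k + m), colWeight u a b S j
      = (v₀ * (1 - u ^ (a k - b k)) + v₁ * u ^ (a k - b k)) *
          ∏ j ∈ Finset.Ico k (k + m), gauss u (a j - b (j + 1)) (b j - b (j + 1)) := by
  induction m with
  | zero =>
    intro k ha hb v₀ v₁
    rw [add_zero] at ha hb
    simp [ha, hb]
  | succ m ih =>
    intro k ha hb v₀ v₁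
    rw [← add_assoc, add_right_comm] at ha hb
    set R := Finset.Ico (k + 1) (k + 1 + m)
    have hIco : Finset.Ico k (k + (m + 1)) = insert k R := by
      ext x
      simp only [R, Finset.mem_insert, Finset.mem_Ico]
      omega
    have hout := ih (k + 1) ha hb 1 1
    have hin := ih (k + 1) ha hb 1 (1 - u ^ (a k - a (k + 1)))
    simp only [ite_self, one_mul] at hout hin
    have hexp : u ^ (a k - a (k + 1)) * u ^ (a (k + 1) - b (k + 1)) = u ^ (a k - b (k + 1)) := by
      rw [← zpow_add₀ hu, sub_add_sub_cancel]
    have hstep := one_sub_zpow_mul_gauss_sub_one hU (a k - b (k + 1)) (b k - b (k + 1))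
    rw [sub_sub_sub_cancel_right, sub_right_comm] at hstep
    rw [hIco, sum_powerset_insert_prod_colWeight fun j hj => (Finset.mem_Ico.1 hj).1, hout, hin,
      Finset.prod_insert (by simp [R])]
    linear_combination (v₀ * ∏ j ∈ R, gauss u (a j - b (j + 1)) (b j - b (j + 1))) * hstep -
      v₀ * gauss u (a k - 1 - b (k + 1)) (b k - b (k + 1)) *
        (∏ j ∈ R, gauss u (a j - b (j + 1)) (b j - b (j + 1))) * hexp

end ColWeight

section Strips

open Finset

variable {f g β : ℕ → ℕ} {S S' : Finset ℕ} {j : ℕ}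

/-- Shortening the columns `j ∈ S` of `f` by one box leaves a partition containing `g`. -/
def IsRemovable (f g : ℕ → ℕ) (S : Finset ℕ) : Prop :=
  ∀ j ∈ S, conj g j < conj f j ∧ (j + 1 ∉ S → conj f (j + 1) < conj f j)

noncomputable def shortenCols (f : ℕ → ℕ) (S : Finset ℕ) : ℕ → ℕ :=
  ofCols (fun j => conj f j - if j ∈ S then 1 else 0) (f 0)

noncomputable def shorterCols (f β : ℕ → ℕ) : Finset ℕ := {j ∈ Icc 1 (f 0) | conj β j < conj f j}

lemma mem_shorterCols : j ∈ shorterCols f β ↔ (1 ≤ j ∧ j ≤ f 0) ∧ conj β j < conj f j := by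
  rw [shorterCols, mem_filter, mem_Icc]

lemma conj_shortenCols (hf : IsPartition f) (hS : IsRemovable f g S) (hj : 1 ≤ j) :
    conj (shortenCols f S) j = conj f j - if j ∈ S then 1 else 0 := by
  refine conj_ofCols (fun j k hj hjk => ?_) (fun j hj => by simp [conj_eq_zero hf hj]) hj
  induction k, hjk using Nat.le_induction with
  | base => exact le_rfl
  | succ k hjk ih =>
    refine le_trans ?_ ih
    have hanti := conj_anti hf (hj.trans hjk) (by omega : k ≤ k + 1)
    by_cases hk : k ∈ S
    · by_cases hk1 : k + 1 ∈ S
      · simp only [hk, hk1, if_true]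
        omega
      · have := (hS k hk).2 hk1
        simp only [hk, hk1, if_true, if_false]
        omega
    · split_ifs <;> omega

lemma shortenCols_le (hf : IsPartition f) (i : ℕ) : shortenCols f S i ≤ f i :=
  calc shortenCols f S i ≤ ofCols (conj f) (f 0) i := ofCols_mono (fun _ _ => Nat.sub_le _ _) i
    _ = f i := by rw [ofCols_conj hf le_rfl]

lemma le_shortenCols (hg : IsPartition g) (hf : IsPartition f) (hgf : ∀ i, g i ≤ f i)
    (hS : IsRemovable f g S) (i : ℕ) : g i ≤ shortenCols f S i :=
  calc g i = ofCols (conj g) (f 0) i := by rw [ofCols_conj hg (hgf 0)]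
    _ ≤ shortenCols f S i := ofCols_mono (fun j hj => by
        by_cases hjS : j ∈ S
        · have := (hS j hjS).1
          simp only [hjS, if_true]
          omega
        · simpa [hjS] using conj_mono hg hf hgf (mem_Icc.1 hj).1) i

lemma isHStrip_shortenCols (hf : IsPartition f) (hS : IsRemovable f g S) :
    IsHStrip f (shortenCols f S) :=
  ⟨shortenCols_le hf, fun j hj => by rw [conj_shortenCols hf hS hj]; split_ifs <;> omega⟩

lemma eq_of_shortenCols_eq (hf : IsPartition f) (hS : S ⊆ Icc 1 (f 0)) (hS' : S' ⊆ Icc 1 (f 0))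
    (hSr : IsRemovable f g S) (hSr' : IsRemovable f g S')
    (h : shortenCols f S = shortenCols f S') : S = S' := by
  ext j
  rcases Nat.eq_zero_or_pos j with rfl | hj
  · exact iff_of_false (fun h0 => by simpa using hS h0) (fun h0 => by simpa using hS' h0)
  have hconj := conj_shortenCols hf hSr hj
  rw [h, conj_shortenCols hf hSr' hj] at hconj
  constructor
  · intro hjS
    by_contra hjS'
    have := (hSr j hjS).1
    simp only [hjS, hjS', if_true, if_false] at hconj
    omega
  · intro hjS'
    by_contra hjS
    have := (hSr' j hjS').1
    simp only [hjS, hjS', if_true, if_false] at hconj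
    omega

lemma conj_eq_sub_of_isHStrip (hf : IsPartition f) (hβ : IsPartition β) (hstrip : IsHStrip f β)
    (hj : 1 ≤ j) : conj β j = conj f j - if j ∈ shorterCols f β then 1 else 0 := by
  have hle := conj_mono hβ hf hstrip.1 hj
  have hge := hstrip.2 j hj
  by_cases hj0 : j ≤ f 0
  · by_cases hlt : conj β j < conj f j
    · rw [if_pos (mem_shorterCols.2 ⟨⟨hj, hj0⟩, hlt⟩)]
      omega
    · rw [if_neg fun h => hlt (mem_shorterCols.1 h).2]
      omega
  · have := conj_eq_zero hf (not_le.1 hj0)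
    rw [if_neg fun h => hj0 (mem_shorterCols.1 h).1.2]
    omega

lemma isRemovable_shorterCols (hg : IsPartition g) (hf : IsPartition f) (hβ : IsPartition β)
    (hgβ : ∀ i, g i ≤ β i) (hstrip : IsHStrip f β) : IsRemovable f g (shorterCols f β) := by
  intro j hjS
  obtain ⟨⟨hj, -⟩, hlt⟩ := mem_shorterCols.1 hjS
  refine ⟨(conj_mono hg hβ hgβ hj).trans_lt hlt, fun hj1 => ?_⟩
  have hβj1 := conj_eq_sub_of_isHStrip hf hβ hstrip (by omega : 1 ≤ j + 1)
  rw [if_neg hj1, Nat.sub_zero] at hβj1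
  have := conj_anti hβ hj (by omega : j ≤ j + 1)
  omega

lemma shortenCols_shorterCols (hf : IsPartition f) (hβ : IsPartition β) (hstrip : IsHStrip f β) :
    shortenCols f (shorterCols f β) = β := by
  conv_rhs => rw [← ofCols_conj hβ (hstrip.1 0)]
  funext i
  simp only [shortenCols, ofCols]
  congr 1
  exact filter_congr fun j hj => by rw [conj_eq_sub_of_isHStrip hf hβ hstrip (mem_Icc.1 hj).1]

lemma bijOn_shortenCols (hg : IsPartition g) (hf : IsPartition f) (hgf : ∀ i, g i ≤ f i) :
    Set.BijOn (shortenCols f) ↑({S ∈ (Icc 1 (f 0)).powerset | IsRemovable f g S})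
      {β | IsPartition β ∧ (∀ i, g i ≤ β i) ∧ IsHStrip f β} := by
  refine ⟨fun S hS => ?_, fun S hS S' hS' h => ?_, fun β hβ => ?_⟩
  · obtain ⟨-, hSr⟩ := mem_filter.1 hS
    exact ⟨isPartition_ofCols _ _, le_shortenCols hg hf hgf hSr, isHStrip_shortenCols hf hSr⟩
  · obtain ⟨hS, hSr⟩ := mem_filter.1 hS
    obtain ⟨hS', hSr'⟩ := mem_filter.1 hS'
    exact eq_of_shortenCols_eq hf (mem_powerset.1 hS) (mem_powerset.1 hS') hSr hSr' h
  · obtain ⟨hβ, hgβ, hstrip⟩ := hβ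
    refine ⟨shorterCols f β, mem_filter.2 ⟨mem_powerset.2 (filter_subset _ _),
      isRemovable_shorterCols hg hf hβ hgβ hstrip⟩, shortenCols_shorterCols hf hβ hstrip⟩

end Strips

section Summand

open Finset

variable {F : Type*} [Field F] {u : F} {f g : ℕ → ℕ} {S : Finset ℕ}

lemma sk_eq_of_le (hf : IsPartition f) (hg : IsPartition g) (hgf : ∀ i, g i ≤ f i) {M : ℕ}
    (hM : f 0 ≤ M) :
    sk u f g = u ^ (∑ j ∈ Icc 1 M, (conj f j - conj g j).choose 2) *
      ∏ j ∈ Icc 1 M,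
        gauss u ((conj f j : ℤ) - conj g (j + 1)) ((conj g j : ℤ) - conj g (j + 1)) := by
  have hzero : ∀ j, f 0 < j → conj f j = 0 ∧ conj g j = 0 := fun j hj =>
    ⟨conj_eq_zero hf hj, conj_eq_zero hg ((hgf 0).trans_lt hj)⟩
  rw [sk, sum_subset (Icc_subset_Icc_right hM), prod_subset (Icc_subset_Icc_right hM)]
  · intro j _ hj
    have hj : f 0 < j := by simp_all
    simp [hzero j hj, (hzero (j + 1) (by omega)).2, gauss_zero_zero]
  · intro j _ hj
    have hj : f 0 < j := by simp_all
    simp [(hzero j hj).1, (hzero j hj).2]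

lemma phiStrip_shortenCols (hf : IsPartition f) (hS : IsRemovable f g S) :
    phiStrip u f (shortenCols f S) = ∏ j ∈ Icc 1 (f 0),
      if j ∈ S ∧ j + 1 ∉ S then 1 - u ^ ((conj f j : ℤ) - conj f (j + 1)) else 1 := by
  rw [phiStrip, if_pos (isHStrip_shortenCols hf hS), prod_filter]
  refine prod_congr rfl fun j hj => ?_
  have hj := (mem_Icc.1 hj).1
  have h0 := conj_shortenCols hf hS hj
  have h1 := conj_shortenCols hf hS (by omega : 1 ≤ j + 1)
  rw [← Nat.cast_sub (conj_anti hf hj (by omega)), zpow_natCast]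
  by_cases hjS : j ∈ S
  · have := (hS j hjS).1
    by_cases hj1S : j + 1 ∈ S
    · have := (hS (j + 1) hj1S).1
      simp only [hjS, hj1S, if_true] at h0 h1
      rw [if_neg (by omega), if_neg (by tauto)]
    · simp only [hjS, hj1S, if_true, if_false] at h0 h1
      rw [if_pos (by omega), if_pos ⟨hjS, hj1S⟩]
  · simp only [hjS, if_false] at h0
    rw [if_neg (by omega), if_neg (by tauto)]

lemma pow_mul_pow_choose_two_conj_shortenCols (hg : IsPartition g) (hf : IsPartition f)
    (hgf : ∀ i, g i ≤ f i) (hS : IsRemovable f g S) {j : ℕ} (hj : 1 ≤ j) :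
    u ^ (conj (shortenCols f S) j - conj g j) * u ^ (conj (shortenCols f S) j - conj g j).choose 2
      = u ^ (conj f j - conj g j).choose 2 *
        if j ∈ S then 1 else u ^ ((conj f j : ℤ) - conj g j) := by
  rw [conj_shortenCols hf hS hj, ← pow_add]
  by_cases hjS : j ∈ S
  · have := (hS j hjS).1
    obtain ⟨e, he⟩ : ∃ e, conj f j - conj g j = e + 1 :=
      ⟨_, (Nat.succ_pred_eq_of_pos (by omega)).symm⟩
    rw [if_pos hjS, if_pos hjS, mul_one, Nat.sub_right_comm, he, Nat.add_sub_cancel,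
      Nat.choose_succ_succ', Nat.choose_one_right]
  · have := conj_mono hg hf hgf hj
    rw [if_neg hjS, if_neg hjS, Nat.sub_zero, ← Nat.cast_sub this, zpow_natCast, ← pow_add,
      add_comm]

theorem phiStrip_mul_pow_mul_sk_shortenCols (hg : IsPartition g) (hf : IsPartition f)
    (hgf : ∀ i, g i ≤ f i) (hS : IsRemovable f g S) :
    phiStrip u f (shortenCols f S) * u ^ (psize (shortenCols f S) - psize g) *
        sk u (shortenCols f S) g
      = u ^ (∑ j ∈ Icc 1 (f 0), (conj f j - conj g j).choose 2) *
        ∏ j ∈ Icc 1 (f 0), colWeight u (fun j => (conj f j : ℤ)) (fun j => (conj g j : ℤ)) S j := by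
  set β := shortenCols f S
  have hβ : IsPartition β := isPartition_ofCols _ _
  have hgβ := le_shortenCols hg hf hgf hS
  have hβ0 : β 0 ≤ f 0 := shortenCols_le hf 0
  have hpow := prod_congr (s₁ := Icc 1 (f 0)) rfl fun j hj =>
    pow_mul_pow_choose_two_conj_shortenCols (u := u) hg hf hgf hS (mem_Icc.1 hj).1
  rw [prod_mul_distrib, prod_mul_distrib, prod_pow_eq_pow_sum, prod_pow_eq_pow_sum,
    prod_pow_eq_pow_sum] at hpow
  have hgauss : ∏ j ∈ Icc 1 (f 0),
        gauss u ((conj β j : ℤ) - conj g (j + 1)) ((conj g j : ℤ) - conj g (j + 1))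
      = ∏ j ∈ Icc 1 (f 0),
        gauss u ((conj f j : ℤ) - (if j ∈ S then 1 else 0) - conj g (j + 1))
          ((conj g j : ℤ) - conj g (j + 1)) := by
    refine prod_congr rfl fun j hj => ?_
    have hj := (mem_Icc.1 hj).1
    rw [conj_shortenCols hf hS hj]
    split_ifs with hjS
    · have := (hS j hjS).1
      push_cast [Nat.cast_sub (by omega : 1 ≤ conj f j)]
      rfl
    · simp
  rw [psize_eq_sum_conj hβ hβ0, psize_eq_sum_conj hg (hgf 0), ← sum_tsub_distrib _
    fun j hj => conj_mono hg hβ hgβ (mem_Icc.1 hj).1, sk_eq_of_le hβ hg hgβ hβ0, hgauss,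
    phiStrip_shortenCols hf hS]
  simp only [colWeight, prod_mul_distrib]
  linear_combination ((∏ j ∈ Icc 1 (f 0),
      if j ∈ S ∧ j + 1 ∉ S then 1 - u ^ ((conj f j : ℤ) - conj f (j + 1)) else 1) *
    ∏ j ∈ Icc 1 (f 0),
    gauss u ((conj f j : ℤ) - (if j ∈ S then 1 else 0) - conj g (j + 1))
      ((conj g j : ℤ) - conj g (j + 1))) * hpow

end Summand

section Main

open Finset

variable {F : Type*} [Field F] {u : F} {f g : ℕ → ℕ} {S : Finset ℕ}

lemma prod_colWeight_eq_zero_of_not_isRemovable (hf : IsPartition f) (hS : S ⊆ Icc 1 (f 0))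
    (hSr : ¬ IsRemovable f g S) :
    ∏ j ∈ Icc 1 (f 0), colWeight u (fun j => (conj f j : ℤ)) (fun j => (conj g j : ℤ)) S j = 0 := by
  simp only [IsRemovable, not_forall, not_and_or, not_lt] at hSr
  obtain ⟨j, hjS, hgj | ⟨hj1S, hfj⟩⟩ := hSr
  · exact prod_eq_zero (hS hjS) (colWeight_eq_zero_of_le hjS (by omega))
  · have := conj_anti hf (mem_Icc.1 (hS hjS)).1 (by omega : j ≤ j + 1)
    exact prod_eq_zero (hS hjS) (colWeight_eq_zero_of_eq hjS hj1S (by omega))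

theorem finsum_phiStrip_mul_sk (hu : u ≠ 0) (hU : ∀ k : ℕ, 1 ≤ k → u ^ k ≠ 1)
    (hf : IsPartition f) (hg : IsPartition g) (hgf : ∀ i, g i ≤ f i) :
    ∑ᶠ (β : ℕ → ℕ) (_ : IsPartition β ∧ (∀ i, g i ≤ β i) ∧ IsHStrip f β),
        phiStrip u f β * u ^ (psize β - psize g) * sk u β g = sk u f g := by
  set a : ℕ → ℤ := fun j => conj f j
  set b : ℕ → ℤ := fun j => conj g j
  have htransfer := sum_powerset_Ico_prod_colWeight hu hU (f 0) 1 (a := a) (b := b)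
    (by simp [a, conj_eq_zero hf]) (by simp [b, conj_eq_zero hg, (hgf 0).trans_lt]) 1 1
  rw [add_comm, Ico_add_one_right_eq_Icc] at htransfer
  simp only [ite_self, one_mul, sub_add_cancel] at htransfer
  calc _ = ∑ᶠ S ∈ (↑({S ∈ (Icc 1 (f 0)).powerset | IsRemovable f g S} : Finset _) : Set _),
        phiStrip u f (shortenCols f S) * u ^ (psize (shortenCols f S) - psize g) *
          sk u (shortenCols f S) g :=
        (finsum_mem_eq_of_bijOn _ (bijOn_shortenCols hg hf hgf) fun _ _ => rfl).symm
    _ = ∑ S ∈ (Icc 1 (f 0)).powerset with IsRemovable f g S,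
        u ^ (∑ j ∈ Icc 1 (f 0), (conj f j - conj g j).choose 2) *
          ∏ j ∈ Icc 1 (f 0), colWeight u a b S j := by
        rw [finsum_mem_coe_finset]
        exact sum_congr rfl fun S hS =>
          phiStrip_mul_pow_mul_sk_shortenCols hg hf hgf (mem_filter.1 hS).2
    _ = ∑ S ∈ (Icc 1 (f 0)).powerset, u ^ (∑ j ∈ Icc 1 (f 0), (conj f j - conj g j).choose 2) *
          ∏ j ∈ Icc 1 (f 0), colWeight u a b S j :=
        sum_subset (filter_subset _ _) fun S hS hSr => by
          rw [prod_colWeight_eq_zero_of_not_isRemovable hf (mem_powerset.1 hS)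
            fun h => hSr (mem_filter.2 ⟨hS, h⟩), mul_zero]
    _ = sk u f g := by rw [← mul_sum, htransfer, sk_eq_of_le hf hg hgf le_rfl]

lemma X_sq_pow_ne_one {k : ℕ} (hk : 1 ≤ k) : ((RatFunc.X : RatFunc ℚ) ^ 2) ^ k ≠ 1 := by
  intro h
  rw [← pow_mul, ← RatFunc.algebraMap_X, ← map_pow,
    ← map_one (algebraMap (Polynomial ℚ) (RatFunc ℚ))] at h
  have := congrArg Polynomial.natDegree (RatFunc.algebraMap_injective ℚ h)
  rw [Polynomial.natDegree_X_pow, Polynomial.natDegree_one] at this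
  omega

end Main

theorem stmt0_general (f g : ℕ → ℕ)
    (hf : IsPartition f)
    (hg : IsPartition g)
    (hsub : ∀ i, g i ≤ f i) :
    (∑ᶠ (β : ℕ → ℕ) (_ : IsPartition β ∧ (∀ i, g i ≤ β i) ∧ IsHStrip f β),
        phiStrip ((RatFunc.X : RatFunc ℚ) ^ 2) f β *
          ((RatFunc.X : RatFunc ℚ) ^ 2) ^ (psize β - psize g) *
          sk ((RatFunc.X : RatFunc ℚ) ^ 2) β g)
      = sk ((RatFunc.X : RatFunc ℚ) ^ 2) f g :=
  finsum_phiStrip_mul_sk (pow_ne_zero 2 RatFunc.X_ne_zero) (fun _ => X_sq_pow_ne_one) hf hg hsub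

/-- For partitions `λ` of length `n ≥ 1` and `μ ⊆ λ` of length `n-1`,
`Σ_{μ ⊆ β ≼ λ} φ_{λ/β}(t²) t^{2(|β|-|μ|)} sk_{β/μ}(t²) = sk_{λ/μ}(t²)`, the sum being over
all partitions `β` with `μ ⊆ β` and `λ/β` a horizontal strip. -/
theorem stmt0 (n : ℕ) (hn : 1 ≤ n) (f g : ℕ → ℕ)
    (hf : IsPartition f) (hfl : HasLength f n)
    (hg : IsPartition g) (hgl : HasLength g (n - 1))
    (hsub : ∀ i, g i ≤ f i) :
    (∑ᶠ (β : ℕ → ℕ) (_ : IsPartition β ∧ (∀ i, g i ≤ β i) ∧ IsHStrip f β),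
        phiStrip ((RatFunc.X : RatFunc ℚ) ^ 2) f β *
          ((RatFunc.X : RatFunc ℚ) ^ 2) ^ (psize β - psize g) *
          sk ((RatFunc.X : RatFunc ℚ) ^ 2) β g)
      = sk ((RatFunc.X : RatFunc ℚ) ^ 2) f g :=
  stmt0_general f g hf hg hsub

end EK
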